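/- arXiv:math/0309395 — 2 statements merged into one kernel-verified Lean document; each statement's English description precedes it below -/
import Mathlib

section
/- Let L₁ → L₂ → L₃ be Lie superalgebra homomorphisms where π₂: L₂ → L₃ is a central extension (surjective with kernel contained in the center of L₂) and π₁: L₁ → L₂ is a central extension. Then the composition π₂ ∘ π₁: L₁ → L₃ is a central extension, provided L₁ is perfect. -/
universe u v

/-- A Lie superalgebra over a field `F`: a `Z₂`-graded vector space with a bilinear
bracket that respects the grading and satisfies super-skew-symmetry and the
super Jacobi identity on homogeneous elements. -/
class LieSuperAlgebra (F : Type u) (L : Type v) [Field F] [AddCommGroup L] [Module F L] where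
  grading : ZMod 2 → Submodule F L
  bracket : L →ₗ[F] L →ₗ[F] L
  grading_sup : grading 0 ⊔ grading 1 = ⊤
  grading_inf : grading 0 ⊓ grading 1 = ⊥
  bracket_mem : ∀ i j : ZMod 2, ∀ x ∈ grading i, ∀ y ∈ grading j, bracket x y ∈ grading (i + j)
  super_skew : ∀ i j : ZMod 2, ∀ x ∈ grading i, ∀ y ∈ grading j,
    bracket x y = -(((-1 : F) ^ (i * j).val) • bracket y x)
  super_jacobi : ∀ i j : ZMod 2, ∀ x ∈ grading i, ∀ y ∈ grading j, ∀ z : L,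
    bracket x (bracket y z) =
      bracket (bracket x y) z + ((-1 : F) ^ (i * j).val) • bracket y (bracket x z)

namespace LieSuperAlgebra

variable (F : Type u) {L L' : Type v} [Field F] [AddCommGroup L] [Module F L]
  [LieSuperAlgebra F L] [AddCommGroup L'] [Module F L'] [LieSuperAlgebra F L']

/-- The bracket, as a binary operation. -/
def br (x y : L) : L := bracket (F := F) x y

/-- The center of a Lie superalgebra. -/
def center : Submodule F L where
  carrier := {z | ∀ x : L, br F z x = 0}
  add_mem' := by
    intro a b ha hb x
    simp only [br, map_add, LinearMap.add_apply] at *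
    rw [ha x, hb x, add_zero]
  zero_mem' := by intro x; simp [br]
  smul_mem' := by
    intro c a ha x
    simp only [br, map_smul, LinearMap.smul_apply] at *
    rw [ha x, smul_zero]

/-- A Lie superalgebra is perfect if it is spanned by brackets. -/
def IsPerfect : Prop :=
  Submodule.span F {z : L | ∃ x y : L, z = br F x y} = ⊤

/-- A homomorphism of Lie superalgebras: a linear map preserving brackets and the grading. -/
def IsHom (f : L →ₗ[F] L') : Prop :=
  (∀ x y : L, f (br F x y) = br F (f x) (f y)) ∧
    ∀ i : ZMod 2, (grading (F := F) (L := L) i).map f ≤ grading (F := F) (L := L') i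

/-- A central extension: a surjective homomorphism whose kernel is central. -/
def IsCentralExtension (π : L →ₗ[F] L') : Prop :=
  IsHom F π ∧ Function.Surjective π ∧ ∀ x : L, π x = 0 → x ∈ center F (L := L)

end LieSuperAlgebra


/-!
If `π₂ (π₁ x) = 0`, then `π₁ x` is central, so every bracket `[x, y]` lies in `ker π₁` and is
central in `L₁`. For homogeneous `x` the super Jacobi identity then gives
`[x, [a, b]] = [[x, a], b] ± [a, [x, b]] = 0`, so `x` commutes with the span of all brackets,
which is `L₁` by perfectness. Since `π₁` respects the grading and the center is graded, the
general case reduces to the homogeneous one.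
-/

namespace LieSuperAlgebra

section Center

variable {F : Type u} {L : Type v} [Field F] [AddCommGroup L] [Module F L] [LieSuperAlgebra F L]

theorem exists_homogeneous_add (z : L) :
    ∃ z₀ ∈ grading (F := F) (L := L) 0, ∃ z₁ ∈ grading (F := F) (L := L) 1, z₀ + z₁ = z :=
  Submodule.mem_sup.mp (grading_sup (F := F) (L := L) ▸ Submodule.mem_top)

theorem linearMap_eq_zero_of_grading {M : Type*} [AddCommGroup M] [Module F M]
    (f : L →ₗ[F] M) (hf : ∀ i, ∀ x ∈ grading (F := F) (L := L) i, f x = 0) : f = 0 := by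
  rw [← LinearMap.ker_eq_top, eq_top_iff, ← grading_sup (F := F) (L := L)]
  exact sup_le (fun x hx => hf 0 x hx) (fun x hx => hf 1 x hx)

theorem disjoint_grading_add_one (i : ZMod 2) :
    Disjoint (grading (F := F) (L := L) i) (grading (F := F) (L := L) (i + 1)) := by
  fin_cases i
  · exact disjoint_iff.mpr grading_inf
  · exact (disjoint_iff.mpr grading_inf).symm

theorem mem_center_iff {z : L} : z ∈ center F ↔ bracket (F := F) z = 0 :=
  ⟨fun h => LinearMap.ext h, fun h x => LinearMap.congr_fun h x⟩

theorem mem_center_of_grading {z : L}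
    (hz : ∀ j, ∀ y ∈ grading (F := F) (L := L) j, br F z y = 0) : z ∈ center F :=
  mem_center_iff.mpr (linearMap_eq_zero_of_grading _ hz)

theorem mem_center_of_add_mem_center {z₀ z₁ : L} (hz : z₀ + z₁ ∈ center F)
    (h₀ : z₀ ∈ grading (F := F) (L := L) 0) (h₁ : z₁ ∈ grading (F := F) (L := L) 1) :
    z₀ ∈ center F ∧ z₁ ∈ center F := by
  have hzero : ∀ j, ∀ y ∈ grading (F := F) (L := L) j, br F z₀ y = 0 ∧ br F z₁ y = 0 := by
    intro j y hy
    have hsum : br F z₀ y + br F z₁ y = 0 := by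
      simpa only [br, map_add, LinearMap.add_apply] using hz y
    have hdeg₁ : br F z₁ y ∈ grading (F := F) (L := L) (0 + j + 1) := by
      rw [show (0 : ZMod 2) + j + 1 = 1 + j by ring]
      exact bracket_mem 1 j z₁ h₁ y hy
    have hz₀y : br F z₀ y = 0 :=
      Submodule.disjoint_def.mp (disjoint_grading_add_one (0 + j)) _ (bracket_mem 0 j z₀ h₀ y hy)
        (eq_neg_of_add_eq_zero_left hsum ▸ neg_mem hdeg₁)
    exact ⟨hz₀y, by rwa [hz₀y, zero_add] at hsum⟩
  exact ⟨mem_center_of_grading fun j y hy => (hzero j y hy).1,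
    mem_center_of_grading fun j y hy => (hzero j y hy).2⟩

theorem br_eq_zero_of_mem_center {z : L} (hz : z ∈ center F) (y : L) : br F y z = 0 := by
  obtain ⟨z₀, h₀, z₁, h₁, rfl⟩ := exists_homogeneous_add (F := F) z
  obtain ⟨hz₀, hz₁⟩ := mem_center_of_add_mem_center hz h₀ h₁
  have hright : ∀ i, ∀ w ∈ grading (F := F) (L := L) i, w ∈ center F → ∀ v, br F v w = 0 := by
    intro i w hw hwc
    refine LinearMap.congr_fun (linearMap_eq_zero_of_grading ((bracket (F := F)).flip w) ?_)
    intro j v hv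
    rw [LinearMap.flip_apply, super_skew j i v hv w hw, show bracket w v = 0 from hwc v,
      smul_zero, neg_zero]
  calc br F y (z₀ + z₁) = br F y z₀ + br F y z₁ := map_add _ _ _
    _ = 0 := by rw [hright 0 z₀ h₀ hz₀ y, hright 1 z₁ h₁ hz₁ y, add_zero]

theorem br_br_eq_zero_of_forall_br_mem_center {i : ZMod 2} {x : L}
    (hx : x ∈ grading (F := F) (L := L) i) (hxc : ∀ y, br F x y ∈ center F) (a b : L) :
    br F x (br F a b) = 0 := by
  refine LinearMap.congr_fun
    (linearMap_eq_zero_of_grading ((bracket (F := F) x).comp ((bracket (F := F)).flip b)) ?_) a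
  intro j a ha
  rw [LinearMap.comp_apply, LinearMap.flip_apply, super_jacobi i j x hx a ha b,
    show bracket (bracket x a) b = 0 from hxc a b,
    show bracket a (bracket x b) = 0 from br_eq_zero_of_mem_center (hxc b) a, smul_zero, add_zero]

theorem mem_center_of_forall_br_br_eq_zero (hL : IsPerfect F (L := L)) {x : L}
    (hx : ∀ a b, br F x (br F a b) = 0) : x ∈ center F := by
  refine mem_center_iff.mpr (LinearMap.ker_eq_top.mp (eq_top_iff.mpr ?_))
  rw [← hL, Submodule.span_le]
  rintro _ ⟨a, b, rfl⟩
  exact hx a b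

end Center

section Hom

variable {F : Type u} {L L' L'' : Type v} [Field F] [AddCommGroup L] [Module F L]
  [LieSuperAlgebra F L] [AddCommGroup L'] [Module F L'] [LieSuperAlgebra F L']
  [AddCommGroup L''] [Module F L''] [LieSuperAlgebra F L'']

theorem IsHom.comp {g : L' →ₗ[F] L''} {f : L →ₗ[F] L'} (hg : IsHom F g) (hf : IsHom F f) :
    IsHom F (g.comp f) := by
  refine ⟨fun x y => by rw [LinearMap.comp_apply, hf.1, hg.1]; rfl, fun i => ?_⟩
  rw [Submodule.map_comp]
  exact (Submodule.map_mono (hf.2 i)).trans (hg.2 i)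

theorem IsHom.map_mem_grading {f : L →ₗ[F] L'} (hf : IsHom F f) {i : ZMod 2} {x : L}
    (hx : x ∈ grading (F := F) (L := L) i) : f x ∈ grading (F := F) (L := L') i :=
  hf.2 i ⟨x, hx, rfl⟩

theorem IsCentralExtension.mem_center_of_map_mem_center {π : L →ₗ[F] L'}
    (hπ : IsCentralExtension F π) (hL : IsPerfect F (L := L)) {i : ZMod 2} {x : L}
    (hx : x ∈ grading (F := F) (L := L) i) (hπx : π x ∈ center F) : x ∈ center F := by
  have hxc : ∀ y, br F x y ∈ center F := fun y => hπ.2.2 _ (by rw [hπ.1.1, hπx (π y)])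
  exact mem_center_of_forall_br_br_eq_zero hL (br_br_eq_zero_of_forall_br_mem_center hx hxc)

end Hom

end LieSuperAlgebra

open LieSuperAlgebra in
/-- The composition of two central extensions of Lie superalgebras is again a
central extension, provided the top superalgebra is perfect. -/
theorem comp_central_extension {F : Type u} {L₁ L₂ L₃ : Type v} [Field F]
    [AddCommGroup L₁] [Module F L₁] [LieSuperAlgebra F L₁]
    [AddCommGroup L₂] [Module F L₂] [LieSuperAlgebra F L₂]
    [AddCommGroup L₃] [Module F L₃] [LieSuperAlgebra F L₃]
    (π₁ : L₁ →ₗ[F] L₂) (π₂ : L₂ →ₗ[F] L₃)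
    (h₁ : IsCentralExtension F π₁) (h₂ : IsCentralExtension F π₂)
    (hperf : IsPerfect F (L := L₁)) :
    IsCentralExtension F (π₂.comp π₁) := by
  refine ⟨h₂.1.comp h₁.1, h₂.2.1.comp h₁.2.1, fun x hx => ?_⟩
  obtain ⟨x₀, hx₀, x₁, hx₁, rfl⟩ := exists_homogeneous_add (F := F) x
  have hπx : π₁ x₀ + π₁ x₁ ∈ center F := map_add π₁ x₀ x₁ ▸ h₂.2.2 _ hx
  obtain ⟨hπx₀, hπx₁⟩ :=
    mem_center_of_add_mem_center hπx (h₁.1.map_mem_grading hx₀) (h₁.1.map_mem_grading hx₁)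
  exact add_mem (h₁.mem_center_of_map_mem_center hperf hx₀ hπx₀)
    (h₁.mem_center_of_map_mem_center hperf hx₁ hπx₁)
end

section
/- Let π: L̂ → L be the universal central extension of a perfect Lie superalgebra L over a field of characteristic zero, where L has a weight decomposition L = ⊕_{α∈Δ∪{0}} L_α with respect to an abelian subalgebra h, with Δ ⊆ h*\{0} finite and L_0 = Σ_{α∈Δ}[L_α,L_{-α}]. Define L̂_α = {x ∈ L̂ : [h',x] = α(π(h'))x for all h' ∈ π⁻¹(h)} for α ∈ Δ and L̂_0 = Σ_{α∈Δ}[L̂_α, L̂_{-α}]. Then L̂ = ⊕_{α∈Δ∪{0}} L̂_α, ker π ⊆ L̂_0, and π restricts to a linear isomorphism L̂_α → L_α for each α ∈ Δ. -/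
universe u v

namespace LieSuperAlgebra

/-- The weight space of `L` of weight `α` relative to an abelian subalgebra `h`. -/
def weightSpace (F : Type u) {L : Type v} [Field F] [AddCommGroup L] [Module F L]
    [LieSuperAlgebra F L] (h : Submodule F L) (α : Module.Dual F h) : Submodule F L where
  carrier := {x | ∀ y : h, br F (y : L) x = α y • x}
  add_mem' := by
    intro a b ha hb y
    simp only [br, map_add] at *
    rw [ha y, hb y, smul_add]
  zero_mem' := by intro y; simp [br]
  smul_mem' := by
    intro c a ha y
    simp only [br, map_smul] at *
    rw [ha y, smul_comm]

/-- The weight space of a central extension `π : L̂ → L`, relative to the preimage of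
an abelian subalgebra `h ⊆ L`:  all `x` with `[h',x] = α(π(h'))·x` for every
`h' ∈ π⁻¹(h)`. -/
def hatWeightSpace (F : Type u) {Lh L : Type v} [Field F]
    [AddCommGroup Lh] [Module F Lh] [LieSuperAlgebra F Lh]
    [AddCommGroup L] [Module F L] [LieSuperAlgebra F L]
    (π : Lh →ₗ[F] L) (h : Submodule F L) (α : Module.Dual F h) : Submodule F Lh where
  carrier := {x | ∀ (y : Lh) (hy : π y ∈ h), br F y x = α ⟨π y, hy⟩ • x}
  add_mem' := by
    intro a b ha hb y hy
    simp only [br, map_add] at *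
    rw [ha y hy, hb y hy, smul_add]
  zero_mem' := by intro y hy; simp [br]
  smul_mem' := by
    intro c a ha y hy
    simp only [br, map_smul] at *
    rw [ha y hy, smul_comm]

end LieSuperAlgebra

namespace LieSuperAlgebra

section Aux

variable {F : Type u} {L : Type v} [Field F] [AddCommGroup L] [Module F L] [LieSuperAlgebra F L]

lemma br_def (x y : L) : br F x y = bracket (F := F) x y := rfl

lemma br_add_left (x y z : L) : br F (x + y) z = br F x z + br F y z := by
  simp [br]

lemma br_add_right (x y z : L) : br F x (y + z) = br F x y + br F x z := by
  simp [br]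

lemma br_smul_left (c : F) (x z : L) : br F (c • x) z = c • br F x z := by
  simp [br]

lemma br_smul_right (c : F) (x z : L) : br F x (c • z) = c • br F x z := by
  simp [br]

lemma br_zero_left (z : L) : br F 0 z = 0 := by simp [br]

lemma br_zero_right (z : L) : br F z 0 = 0 := by simp [br]

lemma br_sum_left {ι : Type*} (s : Finset ι) (u : ι → L) (b : L) :
    br F (∑ i ∈ s, u i) b = ∑ i ∈ s, br F (u i) b := by
  simp [br]

lemma br_sum_right {ι : Type*} (s : Finset ι) (u : ι → L) (b : L) :
    br F b (∑ i ∈ s, u i) = ∑ i ∈ s, br F b (u i) := by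
  simp [br]

lemma exists_grading_decomp (x : L) :
    ∃ a ∈ grading (F := F) (L := L) 0, ∃ b ∈ grading (F := F) (L := L) 1, x = a + b := by
  have hx : x ∈ grading (F := F) (L := L) 0 ⊔ grading (F := F) (L := L) 1 := by
    rw [grading_sup]; trivial
  obtain ⟨a, ha, b, hb, hab⟩ := Submodule.mem_sup.mp hx
  exact ⟨a, ha, b, hb, hab.symm⟩

end Aux

section CE

variable {F : Type u} {L L' : Type v} [Field F] [AddCommGroup L] [Module F L]
  [LieSuperAlgebra F L] [AddCommGroup L'] [Module F L'] [LieSuperAlgebra F L']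
  (π : L →ₗ[F] L') (hπ : IsCentralExtension F π)

include hπ

lemma ce_br_left_zero {z : L} (hz : π z = 0) (x : L) : br F z x = 0 :=
  hπ.2.2 z hz x

lemma ce_grading_apply {i : ZMod 2} {x : L} (hx : x ∈ grading (F := F) i) :
    π x ∈ grading (F := F) (L := L') i :=
  hπ.1.2 i ⟨x, hx, rfl⟩

lemma ce_ker_comp {z : L} (hz : π z = 0) :
    ∃ a ∈ grading (F := F) (L := L) 0, ∃ b ∈ grading (F := F) (L := L) 1,
      z = a + b ∧ π a = 0 ∧ π b = 0 := by
  obtain ⟨a, ha, b, hb, hab⟩ := exists_grading_decomp (F := F) z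
  have h1 : π a + π b = 0 := by rw [← map_add, ← hab, hz]
  have ha' : π a ∈ grading (F := F) (L := L') 0 := ce_grading_apply π hπ ha
  have hb' : π b ∈ grading (F := F) (L := L') 1 := ce_grading_apply π hπ hb
  have hmem : π a ∈ grading (F := F) (L := L') 0 ⊓ grading (F := F) (L := L') 1 := by
    refine ⟨ha', ?_⟩
    rw [eq_neg_of_add_eq_zero_left h1]
    exact neg_mem hb'
  rw [grading_inf] at hmem
  have hpa : π a = 0 := hmem
  refine ⟨a, ha, b, hb, hab, hpa, ?_⟩
  rwa [hpa, zero_add] at h1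

lemma ce_br_right_zero {z : L} (hz : π z = 0) (x : L) : br F x z = 0 := by
  obtain ⟨a, ha, b, hb, hab, hpa, hpb⟩ := ce_ker_comp π hπ hz
  obtain ⟨c, hc, d, hd, hcd⟩ := exists_grading_decomp (F := F) x
  have key : ∀ (i j : ZMod 2), ∀ u ∈ grading (F := F) (L := L) i,
      ∀ v ∈ grading (F := F) (L := L) j, π v = 0 → br F u v = 0 := by
    intro i j u hu v hv hpv
    have hsk := super_skew (F := F) i j u hu v hv
    have hz' : bracket (F := F) v u = 0 := ce_br_left_zero π hπ hpv u
    show bracket (F := F) u v = 0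
    rw [hsk, hz', smul_zero, neg_zero]
  rw [hcd, hab, br_add_left, br_add_right, br_add_right,
    key 0 0 c hc a ha hpa, key 0 1 c hc b hb hpb,
    key 1 0 d hd a ha hpa, key 1 1 d hd b hb hpb]
  simp

/-- Decompose an element of `π⁻¹(h)` into a grading-0 part and a kernel part. -/
lemma ce_h_decomp {h : Submodule F L'} (hh0 : h ≤ grading (F := F) (L := L') 0)
    {v : L} (hv : π v ∈ h) :
    ∃ p ∈ grading (F := F) (L := L) 0, ∃ c : L, π c = 0 ∧ v = p + c := by
  obtain ⟨p, hp, c, hc, hdec⟩ := exists_grading_decomp (F := F) v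
  have h1 : π c ∈ grading (F := F) (L := L') 1 := ce_grading_apply π hπ hc
  have h0 : π c ∈ grading (F := F) (L := L') 0 := by
    have : π c = π v - π p := by rw [hdec]; simp
    rw [this]
    exact sub_mem (hh0 hv) (ce_grading_apply π hπ hp)
  have hmem : π c ∈ grading (F := F) (L := L') 0 ⊓ grading (F := F) (L := L') 1 := ⟨h0, h1⟩
  rw [grading_inf] at hmem
  exact ⟨p, hp, c, hmem, hdec⟩

/-- Jacobi identity when the first element lies over `h`. -/
lemma ce_jacobi {h : Submodule F L'} (hh0 : h ≤ grading (F := F) (L := L') 0)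
    {v : L} (hv : π v ∈ h) (x y : L) :
    br F v (br F x y) = br F (br F v x) y + br F x (br F v y) := by
  obtain ⟨p, hp, c, hpc, hdec⟩ := ce_h_decomp π hπ hh0 hv
  have hred : ∀ w : L, br F v w = br F p w := by
    intro w
    rw [hdec, br_add_left, ce_br_left_zero π hπ hpc, add_zero]
  rw [hred, hred, hred]
  obtain ⟨x0, hx0, x1, hx1, hxd⟩ := exists_grading_decomp (F := F) x
  have jac : ∀ (j : ZMod 2), ∀ u ∈ grading (F := F) (L := L) j,
      br F p (br F u y) = br F (br F p u) y + br F u (br F p y) := by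
    intro j u hu
    have := super_jacobi (F := F) 0 j p hp u hu y
    simpa [br_def, ZMod.val_zero] using this
  rw [hxd]
  simp only [br_add_left, br_add_right]
  rw [jac 0 x0 hx0, jac 1 x1 hx1]
  abel

end CE

end LieSuperAlgebra

namespace LieSuperAlgebra

section Hat

variable {F : Type u} {L L' : Type v} [Field F] [AddCommGroup L] [Module F L]
  [LieSuperAlgebra F L] [AddCommGroup L'] [Module F L'] [LieSuperAlgebra F L']
  (π : L →ₗ[F] L') (hπ : IsCentralExtension F π) {h : Submodule F L'}

lemma mem_hatWS {α : Module.Dual F h} {x : L} :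
    x ∈ hatWeightSpace F π h α ↔
      ∀ (y : L) (hy : π y ∈ h), br F y x = α ⟨π y, hy⟩ • x := Iff.rfl

lemma mem_weightSpace' {α : Module.Dual F h} {x : L'} :
    x ∈ weightSpace F h α ↔ ∀ y : h, br F (y : L') x = α y • x := Iff.rfl

include hπ

lemma hat_br_mem (hh0 : h ≤ grading (F := F) (L := L') 0)
    {α β : Module.Dual F h} {x y : L}
    (hx : x ∈ hatWeightSpace F π h α) (hy : y ∈ hatWeightSpace F π h β) :
    br F x y ∈ hatWeightSpace F π h (α + β) := by
  rw [mem_hatWS]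
  intro u hu
  rw [ce_jacobi π hπ hh0 hu x y, (mem_hatWS (π := π)).mp hx u hu, (mem_hatWS (π := π)).mp hy u hu,
    br_smul_left, br_smul_right, LinearMap.add_apply, add_smul]

lemma hat_map_le (α : Module.Dual F h) :
    Submodule.map π (hatWeightSpace F π h α) ≤ weightSpace F h α := by
  rintro _ ⟨x, hx, rfl⟩
  rw [mem_weightSpace']
  intro y
  obtain ⟨u, hu⟩ := hπ.2.1 (y : L')
  have hu' : π u ∈ h := by rw [hu]; exact y.2
  calc br F (y : L') (π x) = br F (π u) (π x) := by rw [hu]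
    _ = π (br F u x) := (hπ.1.1 u x).symm
    _ = π (α ⟨π u, hu'⟩ • x) := by rw [(mem_hatWS (π := π)).mp hx u hu']
    _ = α y • π x := by
        rw [map_smul, show (⟨π u, hu'⟩ : h) = y from Subtype.ext hu]

lemma hat_inj {α : Module.Dual F h} (hα : α ≠ 0)
    {x : L} (hx : x ∈ hatWeightSpace F π h α) (hpx : π x = 0) : x = 0 := by
  obtain ⟨y, hy⟩ := DFunLike.ne_iff.mp hα
  simp only [LinearMap.zero_apply] at hy
  obtain ⟨u, hu⟩ := hπ.2.1 (y : L')
  have hu' : π u ∈ h := by rw [hu]; exact y.2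
  have h1 := (mem_hatWS (π := π)).mp hx u hu'
  rw [ce_br_right_zero π hπ hpx u] at h1
  have h2 : α y • x = 0 := by
    rw [show (y : h) = ⟨π u, hu'⟩ from Subtype.ext hu.symm]
    exact h1.symm
  exact (smul_eq_zero.mp h2).resolve_left hy

lemma hat_surj (hh0 : h ≤ grading (F := F) (L := L') 0)
    (habelian : ∀ x y : h, br F (x : L') (y : L') = 0)
    {α : Module.Dual F h} (hα : α ≠ 0) {x : L'} (hx : x ∈ weightSpace F h α) :
    ∃ xh ∈ hatWeightSpace F π h α, π xh = x := by
  obtain ⟨y, hy⟩ := DFunLike.ne_iff.mp hα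
  simp only [LinearMap.zero_apply] at hy
  obtain ⟨e, he⟩ := hπ.2.1 (y : L')
  have he' : π e ∈ h := by rw [he]; exact y.2
  obtain ⟨u, hu⟩ := hπ.2.1 x
  refine ⟨(α y)⁻¹ • br F e u, ?_, ?_⟩
  · rw [mem_hatWS]
    intro v hv
    rw [br_smul_right, ce_jacobi π hπ hh0 hv e u]
    have hzc : π (br F v e) = 0 := by
      rw [hπ.1.1 v e]
      exact habelian ⟨π v, hv⟩ ⟨π e, he'⟩
    have t1 : br F (br F v e) u = 0 := ce_br_left_zero π hπ hzc u
    have hzz : π (br F v u - α ⟨π v, hv⟩ • u) = 0 := by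
      rw [map_sub, map_smul, hπ.1.1, hu, mem_weightSpace'.mp hx ⟨π v, hv⟩, sub_self]
    have t2 : br F e (br F v u) = α ⟨π v, hv⟩ • br F e u := by
      have hspl : br F v u = (br F v u - α ⟨π v, hv⟩ • u) + α ⟨π v, hv⟩ • u := by abel
      rw [hspl, br_add_right, ce_br_right_zero π hπ hzz e, zero_add, br_smul_right]
    rw [t1, zero_add, t2, smul_comm]
  · rw [map_smul, hπ.1.1, he, hu, mem_weightSpace'.mp hx y, smul_smul,
      inv_mul_cancel₀ hy, one_smul]

lemma hat_map_eq (hh0 : h ≤ grading (F := F) (L := L') 0)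
    (habelian : ∀ x y : h, br F (x : L') (y : L') = 0)
    {α : Module.Dual F h} (hα : α ≠ 0) :
    Submodule.map π (hatWeightSpace F π h α) = weightSpace F h α := by
  refine le_antisymm (hat_map_le π hπ α) ?_
  intro x hx
  obtain ⟨xh, h1, h2⟩ := hat_surj π hπ hh0 habelian hα hx
  exact ⟨xh, h1, h2⟩

lemma hat_homog (hh0 : h ≤ grading (F := F) (L := L') 0)
    {α : Module.Dual F h} {x : L} (hx : x ∈ hatWeightSpace F π h α) :
    ∃ a, (a ∈ hatWeightSpace F π h α ∧ a ∈ grading (F := F) (L := L) 0) ∧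
      ∃ b, (b ∈ hatWeightSpace F π h α ∧ b ∈ grading (F := F) (L := L) 1) ∧ x = a + b := by
  obtain ⟨a, ha, b, hb, hdec⟩ := exists_grading_decomp (F := F) x
  have key : a ∈ hatWeightSpace F π h α := by
    rw [mem_hatWS]
    intro v hv
    obtain ⟨p, hp, c, hpc, hvdec⟩ := ce_h_decomp π hπ hh0 hv
    have hbrv : ∀ w : L, br F v w = br F p w := by
      intro w
      rw [hvdec, br_add_left, ce_br_left_zero π hπ hpc, add_zero]
    have hpa : br F p a ∈ grading (F := F) (L := L) 0 := by
      have := bracket_mem (F := F) 0 0 p hp a ha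
      simpa [br_def] using this
    have hpb : br F p b ∈ grading (F := F) (L := L) 1 := by
      have := bracket_mem (F := F) 0 1 p hp b hb
      simpa [br_def] using this
    have hsum : br F v a + br F v b = α ⟨π v, hv⟩ • a + α ⟨π v, hv⟩ • b := by
      rw [← br_add_right, ← smul_add, ← hdec]
      exact (mem_hatWS (π := π)).mp hx v hv
    have heq : (br F v a - α ⟨π v, hv⟩ • a) + (br F v b - α ⟨π v, hv⟩ • b) = 0 := by
      rw [sub_add_sub_comm, hsum, sub_self]
    have m0 : br F v a - α ⟨π v, hv⟩ • a ∈ grading (F := F) (L := L) 0 := by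
      rw [hbrv]
      exact sub_mem hpa (Submodule.smul_mem _ _ ha)
    have m1 : br F v b - α ⟨π v, hv⟩ • b ∈ grading (F := F) (L := L) 1 := by
      rw [hbrv]
      exact sub_mem hpb (Submodule.smul_mem _ _ hb)
    have hmem : br F v a - α ⟨π v, hv⟩ • a ∈
        grading (F := F) (L := L) 0 ⊓ grading (F := F) (L := L) 1 := by
      refine ⟨m0, ?_⟩
      rw [eq_neg_of_add_eq_zero_left heq]
      exact neg_mem m1
    rw [grading_inf] at hmem
    have : br F v a - α ⟨π v, hv⟩ • a = 0 := hmem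
    exact sub_eq_zero.mp this
  have keyb : b ∈ hatWeightSpace F π h α := by
    have : b = x - a := by rw [hdec]; abel
    rw [this]
    exact sub_mem hx key
  exact ⟨a, ⟨key, ha⟩, b, ⟨keyb, hb⟩, hdec⟩

end Hat

end LieSuperAlgebra

open LieSuperAlgebra in
/-- Lemma (Ltilde): if `π : L̂ → L` is the universal central extension of a perfect Lie
superalgebra `L` with finite weight decomposition relative to an abelian subalgebra `h`,
then `L̂` decomposes into the corresponding weight spaces, the kernel of `π` is contained
in the zero part `L̂₀ = Σ [L̂_α, L̂_{-α}]`, and `π` restricts to a linear isomorphism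
`L̂_α → L_α` for each `α ∈ Δ`. -/
theorem uce_weight_decomposition {F : Type u} {Lh L : Type u} [Field F]
    [AddCommGroup Lh] [Module F Lh] [LieSuperAlgebra F Lh]
    [AddCommGroup L] [Module F L] [LieSuperAlgebra F L]
    (π : Lh →ₗ[F] L) (hπ : IsCentralExtension F π) (hLhperf : IsPerfect F (L := Lh))
    (huniv : ∀ (M : Type u) [AddCommGroup M] [Module F M] [LieSuperAlgebra F M]
      (p : M →ₗ[F] L), IsCentralExtension F p →
        ∃! f : Lh →ₗ[F] M, IsHom F f ∧ p.comp f = π)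
    (h : Submodule F L) (hh0 : h ≤ grading (F := F) (L := L) 0)
    (habelian : ∀ x y : h, br F (x : L) (y : L) = 0)
    (Δ : Set (Module.Dual F h)) (hfin : Δ.Finite) (h0 : (0 : Module.Dual F h) ∉ Δ)
    (hsum : weightSpace F h 0 ⊔ (⨆ α ∈ Δ, weightSpace F h α) = ⊤)
    (hindep : ∀ α ∈ Δ, Disjoint (weightSpace F h α)
        (weightSpace F h 0 ⊔ ⨆ β ∈ Δ \ {α}, weightSpace F h β))
    (hindep0 : Disjoint (weightSpace F h 0) (⨆ α ∈ Δ, weightSpace F h α))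
    (hzero : weightSpace F h 0 = Submodule.span F
        {z : L | ∃ α ∈ Δ, ∃ x ∈ weightSpace F h α, ∃ y ∈ weightSpace F h (-α), z = br F x y}) :
    (Submodule.span F {z : Lh | ∃ α ∈ Δ, ∃ x ∈ hatWeightSpace F π h α,
          ∃ y ∈ hatWeightSpace F π h (-α), z = br F x y}
        ⊔ (⨆ α ∈ Δ, hatWeightSpace F π h α) = ⊤) ∧
      (∀ α ∈ Δ, Disjoint (hatWeightSpace F π h α)
        (Submodule.span F {z : Lh | ∃ α ∈ Δ, ∃ x ∈ hatWeightSpace F π h α,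
            ∃ y ∈ hatWeightSpace F π h (-α), z = br F x y}
          ⊔ ⨆ β ∈ Δ \ {α}, hatWeightSpace F π h β)) ∧
      (Disjoint (Submodule.span F {z : Lh | ∃ α ∈ Δ, ∃ x ∈ hatWeightSpace F π h α,
            ∃ y ∈ hatWeightSpace F π h (-α), z = br F x y})
        (⨆ α ∈ Δ, hatWeightSpace F π h α)) ∧
      (∀ x : Lh, π x = 0 → x ∈ Submodule.span F {z : Lh | ∃ α ∈ Δ,
          ∃ x ∈ hatWeightSpace F π h α, ∃ y ∈ hatWeightSpace F π h (-α), z = br F x y}) ∧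
      (∀ α ∈ Δ, Submodule.map π (hatWeightSpace F π h α) = weightSpace F h α ∧
        ∀ x ∈ hatWeightSpace F π h α, π x = 0 → x = 0) := by
  classical
  set Z := Submodule.span F {z : Lh | ∃ α ∈ Δ, ∃ x ∈ hatWeightSpace F π h α,
      ∃ y ∈ hatWeightSpace F π h (-α), z = br F x y} with hZdef
  set W := ⨆ α ∈ Δ, hatWeightSpace F π h α with hWdef
  have hΔ0 : ∀ α ∈ Δ, α ≠ (0 : Module.Dual F h) := fun α hα he => h0 (he ▸ hα)
  have Zgen : ∀ α ∈ Δ, ∀ x ∈ hatWeightSpace F π h α, ∀ y ∈ hatWeightSpace F π h (-α),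
      br F x y ∈ Z := fun α hα x hx y hy => Submodule.subset_span ⟨α, hα, x, hx, y, hy, rfl⟩
  have Zle0 : Z ≤ hatWeightSpace F π h 0 := by
    rw [hZdef]
    refine Submodule.span_le.mpr ?_
    rintro z ⟨α, hα, x, hx, y, hy, rfl⟩
    have := hat_br_mem π hπ hh0 hx hy
    rwa [add_neg_cancel] at this
  have hatle : ∀ γ ∈ Δ, hatWeightSpace F π h γ ≤ W := fun γ hγ =>
    le_iSup₂ (f := fun α (_ : α ∈ Δ) => hatWeightSpace F π h α) γ hγ
  have mapZ : Submodule.map π Z ≤ weightSpace F h 0 :=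
    le_trans (Submodule.map_mono Zle0) (hat_map_le π hπ 0)
  have mapW : Submodule.map π W ≤ ⨆ α ∈ Δ, weightSpace F h α := by
    rw [hWdef, Submodule.map_iSup]
    refine iSup_mono fun γ => ?_
    rw [Submodule.map_iSup]
    exact iSup_mono fun hγ => hat_map_le π hπ γ
  have Wdec : ∀ w ∈ W, ∃ f : Module.Dual F h →₀ Lh,
      (∀ γ, f γ ∈ hatWeightSpace F π h γ) ∧ (∀ γ, γ ∉ Δ → f γ = 0) ∧
        (f.sum fun _ x => x) = w := by
    intro w hw
    rw [hWdef] at hw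
    obtain ⟨f, hf, hsum'⟩ := (Submodule.mem_iSup_iff_exists_finsupp
      (fun α => ⨆ _ : α ∈ Δ, hatWeightSpace F π h α) w).mp hw
    refine ⟨f, fun γ => ?_, fun γ hγ => ?_, hsum'⟩
    · by_cases hγ : γ ∈ Δ
      · have := hf γ; rwa [iSup_pos hγ] at this
      · have := hf γ; rw [iSup_neg hγ, Submodule.mem_bot] at this
        rw [this]; exact zero_mem _
    · have := hf γ; rwa [iSup_neg hγ, Submodule.mem_bot] at this
  have indL : ∀ s : Finset (Module.Dual F h), (↑s : Set (Module.Dual F h)) ⊆ Δ →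
      ∀ g : Module.Dual F h → L, (∀ β ∈ s, g β ∈ weightSpace F h β) →
        (∑ β ∈ s, g β) = 0 → ∀ β ∈ s, g β = 0 := by
    intro s hs g hg hsum0 β hβ
    have h1 : g β = -∑ γ ∈ s.erase β, g γ :=
      eq_neg_of_add_eq_zero_left (by rw [Finset.add_sum_erase s g hβ, hsum0])
    have h2 : g β ∈ ⨆ γ ∈ Δ \ {β}, weightSpace F h γ := by
      rw [h1]
      refine neg_mem (Submodule.sum_mem _ fun γ hγ => ?_)
      have hγΔ : γ ∈ Δ := hs (Finset.mem_of_mem_erase hγ)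
      have hγne : γ ≠ β := Finset.ne_of_mem_erase hγ
      exact le_iSup₂ (f := fun γ (_ : γ ∈ Δ \ {β}) => weightSpace F h γ) γ
        ⟨hγΔ, by simpa using hγne⟩ (hg γ (Finset.mem_of_mem_erase hγ))
    exact Submodule.disjoint_def.mp (hindep β (hs hβ)) (g β) (hg β hβ)
      (Submodule.mem_sup_right h2)
  have Winj : ∀ w ∈ W, π w = 0 → w = 0 := by
    intro w hw hpw
    obtain ⟨f, hf1, hf2, hf3⟩ := Wdec w hw
    have hsupp : (↑f.support : Set (Module.Dual F h)) ⊆ Δ := by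
      intro γ hγ
      by_contra hγΔ
      exact Finsupp.mem_support_iff.mp hγ (hf2 γ hγΔ)
    have hsumf : ∑ γ ∈ f.support, f γ = w := hf3
    have hps : ∑ γ ∈ f.support, π (f γ) = 0 := by
      rw [← map_sum, hsumf, hpw]
    have hz : ∀ γ ∈ f.support, π (f γ) = 0 :=
      indL f.support hsupp (fun γ => π (f γ))
        (fun γ _ => hat_map_le π hπ γ ⟨f γ, hf1 γ, rfl⟩) hps
    have hfz : ∀ γ ∈ f.support, f γ = 0 := fun γ hγ =>
      hat_inj π hπ (hΔ0 γ (hsupp hγ)) (hf1 γ) (hz γ hγ)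
    rw [← hsumf]
    exact Finset.sum_eq_zero hfz
  have wsbot : ∀ γ : Module.Dual F h, γ ≠ 0 → γ ∉ Δ → weightSpace F h γ = ⊥ := by
    intro γ hγ0 hγΔ
    rw [eq_bot_iff]
    intro x hγx
    rw [Submodule.mem_bot]
    have hx' : x ∈ weightSpace F h 0 ⊔ ⨆ α ∈ Δ, weightSpace F h α := by
      rw [hsum]; trivial
    obtain ⟨x0, hx0, xw, hxw, hdec⟩ := Submodule.mem_sup.mp hx'
    obtain ⟨f, hf, hfs⟩ := (Submodule.mem_iSup_iff_exists_finsupp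
      (fun α => ⨆ _ : α ∈ Δ, weightSpace F h α) xw).mp hxw
    have hfws : ∀ α, f α ∈ weightSpace F h α := by
      intro α
      by_cases hα : α ∈ Δ
      · have := hf α; rwa [iSup_pos hα] at this
      · have := hf α; rw [iSup_neg hα, Submodule.mem_bot] at this
        rw [this]; exact zero_mem _
    have hsupp : (↑f.support : Set (Module.Dual F h)) ⊆ Δ := by
      intro α hα
      by_contra hαΔ
      refine Finsupp.mem_support_iff.mp hα ?_
      have := hf α; rwa [iSup_neg hαΔ, Submodule.mem_bot] at this
    have hxwsum : xw = ∑ α ∈ f.support, f α := hfs.symm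
    have key : ∀ y : h, γ y • x0 = ∑ α ∈ f.support, (α y - γ y) • f α := by
      intro y
      have hA : br F (y : L) x = γ y • x := mem_weightSpace'.mp hγx y
      have hB : br F (y : L) x = ∑ α ∈ f.support, α y • f α := by
        rw [← hdec, br_add_right, mem_weightSpace'.mp hx0 y, hxwsum, br_sum_right]
        simp only [LinearMap.zero_apply, zero_smul, zero_add]
        exact Finset.sum_congr rfl fun α _ => mem_weightSpace'.mp (hfws α) y
      have hC : γ y • x0 = (∑ α ∈ f.support, α y • f α) - γ y • xw := by
        rw [← hB, hA, ← hdec, smul_add]; abel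
      rw [hC, hxwsum, Finset.smul_sum, ← Finset.sum_sub_distrib]
      exact Finset.sum_congr rfl fun α _ => by rw [sub_smul]
    have hx00 : x0 = 0 := by
      obtain ⟨y0, hy0⟩ := DFunLike.ne_iff.mp hγ0
      simp only [LinearMap.zero_apply] at hy0
      have hmem : γ y0 • x0 ∈ (⨆ α ∈ Δ, weightSpace F h α) := by
        rw [key y0]
        refine Submodule.sum_mem _ fun α hα => ?_
        exact le_iSup₂ (f := fun α (_ : α ∈ Δ) => weightSpace F h α) α (hsupp hα)
          (Submodule.smul_mem _ _ (hfws α))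
      have : γ y0 • x0 = 0 :=
        Submodule.disjoint_def.mp hindep0 _ (Submodule.smul_mem _ _ hx0) hmem
      exact (smul_eq_zero.mp this).resolve_left hy0
    have hfz : ∀ α ∈ f.support, f α = 0 := by
      intro α hα
      have hαΔ : α ∈ Δ := hsupp hα
      have hαγ : α ≠ γ := fun he => hγΔ (he ▸ hαΔ)
      obtain ⟨y1, hy1⟩ := DFunLike.ne_iff.mp hαγ
      have hterm : ∀ y : h, (α y - γ y) • f α = 0 := by
        intro y
        refine indL f.support hsupp (fun β => (β y - γ y) • f β)
          (fun β _ => Submodule.smul_mem _ _ (hfws β)) ?_ α hα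
        rw [← key y, hx00, smul_zero]
      have := hterm y1
      exact (smul_eq_zero.mp this).resolve_left (sub_ne_zero.mpr hy1)
    have hxw0 : xw = 0 := by rw [hxwsum]; exact Finset.sum_eq_zero hfz
    rw [← hdec, hx00, hxw0, add_zero]
  have Zsym : ∀ α ∈ Δ, ∀ u ∈ hatWeightSpace F π h (-α), ∀ v ∈ hatWeightSpace F π h α,
      br F u v ∈ Z := by
    intro α hα u hu v hv
    obtain ⟨u0, hu0, u1, hu1, hud⟩ := hat_homog π hπ hh0 hu
    obtain ⟨v0, hv0, v1, hv1, hvd⟩ := hat_homog π hπ hh0 hv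
    have key : ∀ (i j : ZMod 2) (a b : Lh), a ∈ hatWeightSpace F π h (-α) →
        a ∈ grading (F := F) i → b ∈ hatWeightSpace F π h α →
        b ∈ grading (F := F) j → br F a b ∈ Z := by
      intro i j a b ha hgi hb hgj
      have hsk : br F a b = -(((-1 : F) ^ (i * j).val) • br F b a) :=
        super_skew (F := F) i j a hgi b hgj
      rw [hsk]
      exact neg_mem (Submodule.smul_mem _ _ (Zgen α hα b hb a ha))
    rw [hud, hvd, br_add_left, br_add_right, br_add_right]
    exact add_mem
      (add_mem (key 0 0 _ _ hu0.1 hu0.2 hv0.1 hv0.2) (key 0 1 _ _ hu0.1 hu0.2 hv1.1 hv1.2))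
      (add_mem (key 1 0 _ _ hu1.1 hu1.2 hv0.1 hv0.2) (key 1 1 _ _ hu1.1 hu1.2 hv1.1 hv1.2))
  have ZbrW0 : ∀ a ∈ Z, ∀ w ∈ hatWeightSpace F π h 0, br F a w ∈ Z := by
    intro a ha
    refine Submodule.span_induction
      (p := fun x _ => ∀ w ∈ hatWeightSpace F π h 0, br F x w ∈ Z) ?_ ?_ ?_ ?_ ha
    · rintro z ⟨α, hα, x, hx, y, hy, rfl⟩ w hw
      obtain ⟨x0, hx0, x1, hx1, hxd⟩ := hat_homog π hπ hh0 hx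
      obtain ⟨y0, hy0, y1, hy1, hyd⟩ := hat_homog π hπ hh0 hy
      have key : ∀ (i j : ZMod 2) (a b : Lh), a ∈ hatWeightSpace F π h α →
          a ∈ grading (F := F) i → b ∈ hatWeightSpace F π h (-α) →
          b ∈ grading (F := F) j → br F (br F a b) w ∈ Z := by
        intro i j a b ha' hgi hb hgj
        have hjac : br F a (br F b w) = br F (br F a b) w +
            ((-1 : F) ^ (i * j).val) • br F b (br F a w) :=
          super_jacobi (F := F) i j a hgi b hgj w
        have m1 : br F b w ∈ hatWeightSpace F π h (-α) := by
          have := hat_br_mem π hπ hh0 hb hw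
          rwa [add_zero] at this
        have m2 : br F a w ∈ hatWeightSpace F π h α := by
          have := hat_br_mem π hπ hh0 ha' hw
          rwa [add_zero] at this
        have t1 : br F a (br F b w) ∈ Z := Zgen α hα a ha' _ m1
        have t2 : br F b (br F a w) ∈ Z := Zsym α hα b hb _ m2
        have : br F (br F a b) w = br F a (br F b w) -
            ((-1 : F) ^ (i * j).val) • br F b (br F a w) := by
          rw [hjac]; abel
        rw [this]
        exact sub_mem t1 (Submodule.smul_mem _ _ t2)
      rw [hxd, hyd]
      simp only [br_add_left, br_add_right]
      have t00 := key 0 0 _ _ hx0.1 hx0.2 hy0.1 hy0.2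
      have t01 := key 0 1 _ _ hx0.1 hx0.2 hy1.1 hy1.2
      have t10 := key 1 0 _ _ hx1.1 hx1.2 hy0.1 hy0.2
      have t11 := key 1 1 _ _ hx1.1 hx1.2 hy1.1 hy1.2
      first
      | exact add_mem (add_mem t00 t01) (add_mem t10 t11)
      | exact add_mem (add_mem t00 t10) (add_mem t01 t11)
    · intro w _
      rw [br_zero_left]; exact zero_mem _
    · intro x y _ _ hx hy w hw
      rw [br_add_left]; exact add_mem (hx w hw) (hy w hw)
    · intro c x _ hx w hw
      rw [br_smul_left]; exact Submodule.smul_mem _ _ (hx w hw)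
  have Zbr : ∀ a ∈ Z, ∀ b ∈ Z, br F a b ∈ Z := fun a ha b hb => ZbrW0 a ha b (Zle0 hb)
  have hWW : ∀ γ ∈ Δ, ∀ δ ∈ Δ, ∀ u ∈ hatWeightSpace F π h γ, ∀ v ∈ hatWeightSpace F π h δ,
      br F u v ∈ Z ⊔ W := by
    intro γ hγ δ hδ u hu v hv
    have hm : br F u v ∈ hatWeightSpace F π h (γ + δ) := hat_br_mem π hπ hh0 hu hv
    by_cases hc : γ + δ = 0
    · have hδγ : δ = -γ := eq_neg_of_add_eq_zero_right hc
      exact Submodule.mem_sup_left (Zgen γ hγ u hu v (hδγ ▸ hv))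
    · by_cases hcΔ : γ + δ ∈ Δ
      · exact Submodule.mem_sup_right (hatle _ hcΔ hm)
      · have hb := wsbot (γ + δ) hc hcΔ
        have hp0 : π (br F u v) = 0 := by
          have := hat_map_le π hπ (γ + δ) ⟨_, hm, rfl⟩
          rwa [hb, Submodule.mem_bot] at this
        have : br F u v = 0 := hat_inj π hπ hc hm hp0
        rw [this]; exact zero_mem _
  have hZW : ∀ z ∈ Z, ∀ γ ∈ Δ, ∀ v ∈ hatWeightSpace F π h γ, br F z v ∈ Z ⊔ W := by
    intro z hz γ hγ v hv
    have hm : br F z v ∈ hatWeightSpace F π h (0 + γ) := hat_br_mem π hπ hh0 (Zle0 hz) hv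
    rw [zero_add] at hm
    exact Submodule.mem_sup_right (hatle γ hγ hm)
  have hWZ : ∀ γ ∈ Δ, ∀ v ∈ hatWeightSpace F π h γ, ∀ z ∈ Z, br F v z ∈ Z ⊔ W := by
    intro γ hγ v hv z hz
    have hm : br F v z ∈ hatWeightSpace F π h (γ + 0) := hat_br_mem π hπ hh0 hv (Zle0 hz)
    rw [add_zero] at hm
    exact Submodule.mem_sup_right (hatle γ hγ hm)
  have hbW : ∀ a : Lh, (∀ γ ∈ Δ, ∀ v ∈ hatWeightSpace F π h γ, br F a v ∈ Z ⊔ W) →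
      ∀ w ∈ W, br F a w ∈ Z ⊔ W := by
    intro a hgen w hw
    obtain ⟨f, hf1, hf2, hf3⟩ := Wdec w hw
    have hsumf : ∑ γ ∈ f.support, f γ = w := hf3
    rw [← hsumf, br_sum_right]
    refine Submodule.sum_mem _ fun γ hγ => ?_
    have hγΔ : γ ∈ Δ := by
      by_contra hh'
      exact Finsupp.mem_support_iff.mp hγ (hf2 γ hh')
    exact hgen γ hγΔ (f γ) (hf1 γ)
  have SS : ∀ a ∈ Z ⊔ W, ∀ b ∈ Z ⊔ W, br F a b ∈ Z ⊔ W := by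
    intro a ha b hb
    obtain ⟨az, haz, aw, haw, rfl⟩ := Submodule.mem_sup.mp ha
    rw [br_add_left]
    refine add_mem ?_ ?_
    · obtain ⟨bz, hbz, bw, hbw, rfl⟩ := Submodule.mem_sup.mp hb
      rw [br_add_right]
      exact add_mem (Submodule.mem_sup_left (Zbr az haz bz hbz))
        (hbW az (fun γ hγ v hv => hZW az haz γ hγ v hv) bw hbw)
    · obtain ⟨f, hf1, hf2, hf3⟩ := Wdec aw haw
      have hsumf : ∑ γ ∈ f.support, f γ = aw := hf3
      rw [← hsumf, br_sum_left]
      refine Submodule.sum_mem _ fun γ hγ => ?_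
      have hγΔ : γ ∈ Δ := by
        by_contra hh'
        exact Finsupp.mem_support_iff.mp hγ (hf2 γ hh')
      obtain ⟨bz, hbz, bw, hbw, rfl⟩ := Submodule.mem_sup.mp hb
      rw [br_add_right]
      exact add_mem (hWZ γ hγΔ (f γ) (hf1 γ) bz hbz)
        (hbW (f γ) (fun δ hδ v hv => hWW γ hγΔ δ hδ (f γ) (hf1 γ) v hv) bw hbw)
  have hL0map : weightSpace F h 0 ≤ Submodule.map π Z := by
    rw [hzero]
    refine Submodule.span_le.mpr ?_
    rintro z ⟨α, hα, x, hx, y, hy, rfl⟩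
    obtain ⟨xh, hxh, hpx⟩ := hat_surj π hπ hh0 habelian (hΔ0 α hα) hx
    have hna : (-α : Module.Dual F h) ≠ 0 := neg_ne_zero.mpr (hΔ0 α hα)
    obtain ⟨yh, hyh, hpy⟩ := hat_surj π hπ hh0 habelian hna hy
    exact ⟨br F xh yh, Zgen α hα xh hxh yh hyh, by rw [hπ.1.1, hpx, hpy]⟩
  have hWmap : (⨆ α ∈ Δ, weightSpace F h α) ≤ Submodule.map π W := by
    refine iSup_le fun γ => iSup_le fun hγ => ?_
    rw [← hat_map_eq π hπ hh0 habelian (hΔ0 γ hγ)]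
    exact Submodule.map_mono (hatle γ hγ)
  have red : ∀ u : Lh, ∃ s ∈ Z ⊔ W, π (u - s) = 0 := by
    intro u
    have hu : π u ∈ weightSpace F h 0 ⊔ ⨆ α ∈ Δ, weightSpace F h α := by
      rw [hsum]; trivial
    obtain ⟨a, haa, b, hbb, hab⟩ := Submodule.mem_sup.mp hu
    obtain ⟨za, hza, hpza⟩ := hL0map haa
    obtain ⟨zb, hzb, hpzb⟩ := hWmap hbb
    refine ⟨za + zb, add_mem (Submodule.mem_sup_left hza) (Submodule.mem_sup_right hzb), ?_⟩
    rw [map_sub, map_add, hpza, hpzb, hab, sub_self]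
  have htop : Z ⊔ W = ⊤ := by
    rw [eq_top_iff, ← hLhperf]
    refine Submodule.span_le.mpr ?_
    rintro z ⟨u, v, rfl⟩
    obtain ⟨su, hsu, hku⟩ := red u
    obtain ⟨sv, hsv, hkv⟩ := red v
    have e1 : br F u v = br F (u - su) v + br F su v := by
      rw [← br_add_left, sub_add_cancel]
    have e2 : br F su v = br F su (v - sv) + br F su sv := by
      rw [← br_add_right, sub_add_cancel]
    have : br F u v ∈ Z ⊔ W := by
      rw [e1, ce_br_left_zero π hπ hku, zero_add, e2,
        ce_br_right_zero π hπ hkv, zero_add]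
      exact SS su hsu sv hsv
    exact this
  refine ⟨htop, ?_, ?_, ?_, ?_⟩
  · intro α hα
    rw [Submodule.disjoint_def]
    intro x hx hx2
    have p1 : π x ∈ weightSpace F h α := hat_map_le π hπ α ⟨x, hx, rfl⟩
    have p2 : π x ∈ weightSpace F h 0 ⊔ ⨆ β ∈ Δ \ {α}, weightSpace F h β := by
      obtain ⟨xz, hxz, xw, hxw, hdec2⟩ := Submodule.mem_sup.mp hx2
      rw [← hdec2, map_add]
      refine add_mem (Submodule.mem_sup_left (mapZ ⟨xz, hxz, rfl⟩))
        (Submodule.mem_sup_right ?_)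
      have hle : Submodule.map π (⨆ β ∈ Δ \ {α}, hatWeightSpace F π h β) ≤
          ⨆ β ∈ Δ \ {α}, weightSpace F h β := by
        rw [Submodule.map_iSup]
        refine iSup_mono fun β => ?_
        rw [Submodule.map_iSup]
        exact iSup_mono fun hβ => hat_map_le π hπ β
      exact hle ⟨xw, hxw, rfl⟩
    have hp0 : π x = 0 := Submodule.disjoint_def.mp (hindep α hα) (π x) p1 p2
    exact hat_inj π hπ (hΔ0 α hα) hx hp0
  · rw [Submodule.disjoint_def]
    intro x hxZ hxW
    have p1 : π x ∈ weightSpace F h 0 := mapZ ⟨x, hxZ, rfl⟩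
    have p2 : π x ∈ ⨆ α ∈ Δ, weightSpace F h α := mapW ⟨x, hxW, rfl⟩
    exact Winj x hxW (Submodule.disjoint_def.mp hindep0 (π x) p1 p2)
  · intro x hpx
    have hx : x ∈ Z ⊔ W := by rw [htop]; trivial
    obtain ⟨z, hz, w, hw, hdec2⟩ := Submodule.mem_sup.mp hx
    have hsum2 : π z + π w = 0 := by rw [← map_add, hdec2, hpx]
    have hz0 : π z = 0 := by
      refine Submodule.disjoint_def.mp hindep0 _ (mapZ ⟨z, hz, rfl⟩) ?_
      rw [eq_neg_of_add_eq_zero_left hsum2]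
      exact neg_mem (mapW ⟨w, hw, rfl⟩)
    have hw0 : π w = 0 := by rwa [hz0, zero_add] at hsum2
    have hwz : w = 0 := Winj w hw hw0
    rw [← hdec2, hwz, add_zero]
    exact hz
  · intro α hα
    exact ⟨hat_map_eq π hπ hh0 habelian (hΔ0 α hα),
      fun x hx hpx => hat_inj π hπ (hΔ0 α hα) hx hpx⟩
end
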